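/- For every fixed s ∈ Int(S_d) and k, ℓ ∈ {1,…,d}, there exist constants C > 0 and b₀ > 0 such that for all b ∈ (0, b₀), | C_b(s;k,ℓ) − b (s_k 𝟙{k=ℓ} − s_k s_ℓ) | ≤ C b², where C_b(s;k,ℓ) = ∫_{S_d} (x_k − s_k)(x_ℓ − s_ℓ) κ_{s,b}(x) dx; that is, C_b(s;k,ℓ) = b (s_k 𝟙{k=ℓ} − s_k s_ℓ) + O(b²) as b → 0. -/

import Mathlib

open MeasureTheory ProbabilityTheory Real Filter Finset Matrix

noncomputable section

/-- The unit simplex `S_d = {x ∈ [0,1]^d : x_1 + … + x_d ≤ 1}`. -/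
def Sd (d : ℕ) : Set (Fin d → ℝ) :=
  {x | (∀ i, 0 ≤ x i ∧ x i ≤ 1) ∧ ∑ i, x i ≤ 1}

/-- The interior of the unit simplex. -/
def SdInt (d : ℕ) : Set (Fin d → ℝ) :=
  {x | (∀ i, 0 < x i) ∧ ∑ i, x i < 1}

/-- The Dirichlet(u, v) density on the simplex. -/
def Kdir {d : ℕ} (u : Fin d → ℝ) (v : ℝ) (x : Fin d → ℝ) : ℝ :=
  (Gamma ((∑ i, u i) + v) / (Gamma v * ∏ i, Gamma (u i))) *
    (1 - ∑ i, x i) ^ (v - 1) * ∏ i, (x i) ^ (u i - 1)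

/-- The locally adaptive Dirichlet kernel `κ_{s,b}`. -/
def kappa {d : ℕ} (s : Fin d → ℝ) (b : ℝ) : (Fin d → ℝ) → ℝ :=
  Kdir (fun i => s i / b + 1) ((1 - ∑ i, s i) / b + 1)

/-- `A_b(s) = ∫_{S_d} κ_{s,b}(x)² dx`. -/
def Adir {d : ℕ} (b : ℝ) (s : Fin d → ℝ) : ℝ :=
  ∫ x in Sd d, (kappa s b x) ^ 2

/-- Second partial derivative `∂² m / ∂ s_k ∂ s_ℓ` at `s`. -/
def d2 {d : ℕ} (m : (Fin d → ℝ) → ℝ) (k l : Fin d) (s : Fin d → ℝ) : ℝ :=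
  fderiv ℝ (fun x => fderiv ℝ m x (Pi.single l 1)) s (Pi.single k 1)

/-- The function `h_J(s)` from the paper. -/
def hJfun {d : ℕ} (m : (Fin d → ℝ) → ℝ) (J : Finset (Fin d)) (lam : Fin d → ℝ)
    (s : Fin d → ℝ) : ℝ :=
  if J = Finset.univ then
    ∑ k, ∑ l, (1 / 2 : ℝ) * ((lam k + 1) * (if k = l then 1 else 0) + 1) * d2 m k l s
  else
    ∑ k ∈ Jᶜ, ∑ l ∈ Jᶜ, (1 / 2 : ℝ) * ((if k = l then s k else 0) - s k * s l) * d2 m k l s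

/-- The function `ψ_J(s)` from the paper. -/
def psiJ {d : ℕ} (J : Finset (Fin d)) (s : Fin d → ℝ) : ℝ :=
  ((4 * π) ^ ((d : ℝ) - J.card) * (1 - ∑ i, s i) * ∏ i ∈ Jᶜ, s i) ^ (-(1 : ℝ) / 2)

/-- The product `∏_{i ∈ J} Γ(2λ_i+1) / (2^{2λ_i+1} Γ(λ_i+1)²)`. -/
def gamProd {d : ℕ} (J : Finset (Fin d)) (lam : Fin d → ℝ) : ℝ :=
  ∏ i ∈ J, Gamma (2 * lam i + 1) / ((2 : ℝ) ^ (2 * lam i + 1) * Gamma (lam i + 1) ^ 2)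

/-- The local linear smoother with Dirichlet kernel. -/
def mLL {d n : ℕ} (b : ℝ) (X : Fin n → Fin d → ℝ) (Y : Fin n → ℝ) (s : Fin d → ℝ) : ℝ :=
  let 𝒳 : Matrix (Fin n) (Fin (d + 1)) ℝ :=
    Matrix.of fun i => Fin.cases 1 (fun k => X i k - s k)
  let W : Matrix (Fin n) (Fin n) ℝ := Matrix.diagonal fun i => kappa s b (X i)
  ((𝒳ᵀ * W * 𝒳)⁻¹ *ᵥ (𝒳ᵀ *ᵥ (W *ᵥ Y))) 0

/-- The Nadaraya–Watson estimator with Dirichlet kernel. -/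
def mNW {d n : ℕ} (b : ℝ) (X : Fin n → Fin d → ℝ) (Y : Fin n → ℝ) (s : Fin d → ℝ) : ℝ :=
  (∑ i, Y i * kappa s b (X i)) / ∑ j, kappa s b (X j)

/-- Central second moment `C_b(s; k, ℓ)` of the Dirichlet kernel. -/
def CbM {d : ℕ} (b : ℝ) (s : Fin d → ℝ) (k l : Fin d) : ℝ :=
  ∫ x in Sd d, (x k - s k) * (x l - s l) * kappa s b x

end

/-! The kernel `κ_{s,b}` is the Dirichlet density with parameters `u = s/b + 1`,
`v = (1 - ‖s‖₁)/b + 1`, so `C_b(s;k,ℓ)` is a combination of its first and second moments.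
Iterating Beta integrals gives the Dirichlet integral `∫_{S_d} (1-‖x‖₁)^{v-1} ∏ xᵢ^{uᵢ-1} dx =
∏ Γ(uᵢ) Γ(v) / Γ(‖u‖₁ + v)`, and `Γ(x+1) = x Γ(x)` turns it into
`x_k K_{u,v} = u_k/(‖u‖₁+v) · K_{u+e_k,v}`, so every moment is an explicit rational function of
`u, v`. Substituting, `C_b(s;k,ℓ) = b (c + b q) / ((1 + (d+1)b)(1 + (d+2)b))` with
`c = s_k 𝟙{k=ℓ} - s_k s_ℓ`, and the `O(b²)` bound is read off this closed form. -/

theorem mem_Sd_iff {n : ℕ} {x : Fin n → ℝ} : x ∈ Sd n ↔ (∀ i, 0 ≤ x i) ∧ ∑ i, x i ≤ 1 := by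
  refine ⟨fun h => ⟨fun i => (h.1 i).1, h.2⟩, fun ⟨h0, h1⟩ => ⟨fun i => ⟨h0 i, ?_⟩, h1⟩⟩
  exact (Finset.single_le_sum (fun j _ => h0 j) (Finset.mem_univ i)).trans h1

theorem isCompact_Sd (n : ℕ) : IsCompact (Sd n) := by
  refine isCompact_univ_pi (fun _ => isCompact_Icc (a := (0 : ℝ)) (b := 1)) |>.of_isClosed_subset
    ?_ fun x hx i _ => hx.1 i
  simp only [Sd, Set.ofPred_and, Set.ofPred_forall]
  exact (isClosed_iInter fun i => (isClosed_le continuous_const (continuous_apply i)).inter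
    (isClosed_le (continuous_apply i) continuous_const)).inter
    (isClosed_le (by fun_prop) continuous_const)

theorem measurableSet_Sd (n : ℕ) : MeasurableSet (Sd n) :=
  (isCompact_Sd n).isClosed.measurableSet

theorem cons_mem_Sd_iff {n : ℕ} {t : ℝ} {y : Fin n → ℝ} :
    Fin.cons t y ∈ Sd (n + 1) ↔ y ∈ Sd n ∧ t ∈ Set.Icc 0 (1 - ∑ i, y i) := by
  simp only [mem_Sd_iff, Fin.forall_fin_succ, Fin.cons_zero, Fin.cons_succ, Fin.sum_cons,
    Set.mem_Icc]
  constructor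
  · rintro ⟨⟨ht, hy⟩, hsum⟩
    exact ⟨⟨hy, by linarith⟩, ht, by linarith⟩
  · rintro ⟨⟨hy, -⟩, ht, hsum⟩
    exact ⟨⟨ht, hy⟩, by linarith⟩

theorem integral_eq_integral_fin_cons {n : ℕ} {f : (Fin (n + 1) → ℝ) → ℝ} (hf : Integrable f) :
    ∫ x, f x = ∫ y : Fin n → ℝ, ∫ t : ℝ, f (Fin.cons t y) := by
  have he := (volume_preserving_piFinSuccAbove (fun _ : Fin (n + 1) => ℝ) 0).symm
  have hcons : ∀ p : ℝ × (Fin n → ℝ),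
      (MeasurableEquiv.piFinSuccAbove (fun _ => ℝ) 0).symm p = Fin.cons p.1 p.2 := fun p => by
    simp [MeasurableEquiv.piFinSuccAbove_symm_apply, Fin.insertNthEquiv]
  rw [← he.integral_comp', Measure.volume_eq_prod, integral_prod_symm]
  · simp only [hcons]
  · rw [← Measure.volume_eq_prod]
    exact he.integrable_comp_emb (MeasurableEquiv.measurableEmbedding _) |>.2 hf

theorem intervalIntegral_rpow_mul_sub_rpow {a w c : ℝ} (ha : 0 < a) (hw : 0 < w) (hc : 0 < c) :
    ∫ t in (0 : ℝ)..c, t ^ (a - 1) * (c - t) ^ (w - 1) = c ^ (a + w - 1) * beta a w := by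
  have key := Complex.betaIntegral_scaled a w hc
  rw [Complex.betaIntegral_eq_Gamma_mul_div _ _ (by simpa) (by simpa)] at key
  apply Complex.ofReal_injective
  rw [← intervalIntegral.integral_ofReal]
  convert key using 1
  · refine intervalIntegral.integral_congr fun t ht => ?_
    rw [Set.uIcc_of_le hc.le] at ht
    push_cast [Complex.ofReal_cpow ht.1, Complex.ofReal_cpow (sub_nonneg.2 ht.2)]
    rfl
  · push_cast [beta, Complex.ofReal_cpow hc.le, ← Complex.Gamma_ofReal]
    rfl

noncomputable section Dirichlet

variable {n : ℕ}

def dirichletWeight (u : Fin n → ℝ) (v : ℝ) (x : Fin n → ℝ) : ℝ :=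
  (1 - ∑ i, x i) ^ (v - 1) * ∏ i, x i ^ (u i - 1)

def multiBeta (u : Fin n → ℝ) (v : ℝ) : ℝ :=
  (∏ i, Gamma (u i)) * Gamma v / Gamma (∑ i, u i + v)

theorem continuous_dirichletWeight {u : Fin n → ℝ} {v : ℝ} (hu : ∀ i, 1 ≤ u i) (hv : 1 ≤ v) :
    Continuous (dirichletWeight u v) :=
  ((continuous_rpow_const (by linarith)).comp (by fun_prop)).mul <|
    continuous_finsetProd _ fun i _ =>
      (continuous_rpow_const (by linarith [hu i])).comp (continuous_apply i)

theorem dirichletWeight_cons (u : Fin (n + 1) → ℝ) (v t : ℝ) (y : Fin n → ℝ) :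
    dirichletWeight u v (Fin.cons t y) =
      t ^ (u 0 - 1) * (1 - ∑ i, y i - t) ^ (v - 1) * ∏ i, y i ^ (Fin.tail u i - 1) := by
  rw [dirichletWeight, Fin.sum_cons, Fin.prod_univ_succ, add_comm, ← sub_sub]
  simp only [Fin.cons_zero, Fin.cons_succ, Fin.tail]
  ring

theorem integral_indicator_dirichletWeight_cons {u : Fin (n + 1) → ℝ} {v : ℝ} (hu : 1 ≤ u 0)
    (hv : 1 ≤ v) (y : Fin n → ℝ) :
    ∫ t, (Sd (n + 1)).indicator (dirichletWeight u v) (Fin.cons t y) =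
      beta (u 0) v * (Sd n).indicator (dirichletWeight (Fin.tail u) (u 0 + v)) y := by
  by_cases hy : y ∈ Sd n
  swap
  · simp [Set.indicator_of_notMem, cons_mem_Sd_iff, hy]
  have hc : 0 ≤ 1 - ∑ i, y i := sub_nonneg.2 (mem_Sd_iff.1 hy).2
  have hslice : (fun t => (Sd (n + 1)).indicator (dirichletWeight u v) (Fin.cons t y)) =
      (Set.Icc 0 (1 - ∑ i, y i)).indicator (fun t =>
        t ^ (u 0 - 1) * (1 - ∑ i, y i - t) ^ (v - 1) * ∏ i, y i ^ (Fin.tail u i - 1)) := by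
    ext t
    simp only [Set.indicator, cons_mem_Sd_iff, hy, true_and, dirichletWeight_cons]
  rw [hslice, integral_indicator measurableSet_Icc, integral_Icc_eq_integral_Ioc,
    ← intervalIntegral.integral_of_le hc, intervalIntegral.integral_mul_const,
    Set.indicator_of_mem hy, dirichletWeight]
  rcases hc.eq_or_lt with hc0 | hc0
  · rw [← hc0, intervalIntegral.integral_same, zero_rpow (by linarith : u 0 + v - 1 ≠ 0)]
    ring
  · rw [intervalIntegral_rpow_mul_sub_rpow (by linarith) (by linarith) hc0]
    ring

theorem beta_mul_multiBeta_tail {u : Fin (n + 1) → ℝ} {v : ℝ} (h : 0 < u 0 + v) :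
    beta (u 0) v * multiBeta (Fin.tail u) (u 0 + v) = multiBeta u v := by
  have := (Gamma_pos_of_pos h).ne'
  simp only [beta, multiBeta, Fin.prod_univ_succ, Fin.sum_univ_succ, Fin.tail]
  rw [show ∑ i : Fin n, u i.succ + (u 0 + v) = u 0 + ∑ i : Fin n, u i.succ + v by ring]
  field_simp

theorem integral_dirichletWeight {u : Fin n → ℝ} {v : ℝ} (hu : ∀ i, 1 ≤ u i) (hv : 1 ≤ v) :
    ∫ x in Sd n, dirichletWeight u v x = multiBeta u v := by
  induction n generalizing v with
  | zero =>
    have h : Sd 0 = Set.univ := by ext x; simp [Sd]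
    simp [h, dirichletWeight, multiBeta, div_self (Gamma_pos_of_pos (by linarith : 0 < v)).ne',
      measureReal_def, volume_pi, Measure.pi_empty_univ]
  | succ n ih =>
    have hint : Integrable ((Sd (n + 1)).indicator (dirichletWeight u v)) :=
      (integrable_indicator_iff (measurableSet_Sd _)).2 <|
        (continuous_dirichletWeight hu hv).continuousOn.integrableOn_compact (isCompact_Sd _)
    rw [← integral_indicator (measurableSet_Sd _), integral_eq_integral_fin_cons hint]
    simp_rw [integral_indicator_dirichletWeight_cons (hu 0) hv]
    rw [integral_const_mul, integral_indicator (measurableSet_Sd n),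
      ih (u := Fin.tail u) (fun i => hu i.succ) (by linarith [hu 0]),
      beta_mul_multiBeta_tail (by linarith [hu 0])]

end Dirichlet

section DirichletMoments

variable {n : ℕ} {u : Fin n → ℝ} {v : ℝ}

theorem sum_add_pos (hu : ∀ i, 0 < u i) (hv : 0 < v) : 0 < ∑ i, u i + v :=
  add_pos_of_nonneg_of_pos (Finset.sum_nonneg fun i _ => (hu i).le) hv

theorem sum_add_single (u : Fin n → ℝ) (k : Fin n) :
    ∑ i, (u + Pi.single k 1 : Fin n → ℝ) i = ∑ i, u i + 1 := by
  simp [Finset.sum_add_distrib]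

theorem prod_compl_add_single {M : Type*} [CommMonoid M] (g : Fin n → ℝ → M) (u : Fin n → ℝ)
    (k : Fin n) : ∏ i ∈ {k}ᶜ, g i ((u + Pi.single k 1 : Fin n → ℝ) i) = ∏ i ∈ {k}ᶜ, g i (u i) :=
  Finset.prod_congr rfl fun i hi => by
    rw [Pi.add_apply, Pi.single_eq_of_ne (Finset.notMem_singleton.1 (Finset.mem_compl.1 hi)),
      add_zero]

theorem coord_mul_dirichletWeight {x : Fin n → ℝ} {k : Fin n} (hx : 0 ≤ x k) (hk : u k ≠ 0) :
    x k * dirichletWeight u v x = dirichletWeight (u + Pi.single k 1) v x := by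
  rw [dirichletWeight, dirichletWeight, Fintype.prod_eq_mul_prod_compl k,
    Fintype.prod_eq_mul_prod_compl k, prod_compl_add_single (fun i t => x i ^ (t - 1)),
    Pi.add_apply, Pi.single_eq_same, show u k + 1 - 1 = u k - 1 + 1 by ring,
    rpow_add_one' hx (by simpa)]
  ring

theorem multiBeta_pos (hu : ∀ i, 0 < u i) (hv : 0 < v) : 0 < multiBeta u v :=
  div_pos (mul_pos (Finset.prod_pos fun i _ => Gamma_pos_of_pos (hu i)) (Gamma_pos_of_pos hv))
    (Gamma_pos_of_pos (sum_add_pos hu hv))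

theorem multiBeta_add_single (hu : ∀ i, 0 < u i) (hv : 0 < v) (k : Fin n) :
    multiBeta (u + Pi.single k 1) v = u k / (∑ i, u i + v) * multiBeta u v := by
  have hA := sum_add_pos hu hv
  have := (Gamma_pos_of_pos hA).ne'
  rw [multiBeta, multiBeta, sum_add_single, Fintype.prod_eq_mul_prod_compl k,
    Fintype.prod_eq_mul_prod_compl k, prod_compl_add_single (fun _ t => Gamma t),
    Pi.add_apply, Pi.single_eq_same, Gamma_add_one (hu k).ne', add_right_comm,
    Gamma_add_one hA.ne']
  field_simp

theorem Kdir_eq_dirichletWeight_div (u : Fin n → ℝ) (v : ℝ) (x : Fin n → ℝ) :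
    Kdir u v x = dirichletWeight u v x / multiBeta u v := by
  rw [Kdir, dirichletWeight, multiBeta, div_div_eq_mul_div]
  ring

theorem continuous_Kdir (hu : ∀ i, 1 ≤ u i) (hv : 1 ≤ v) : Continuous (Kdir u v) := by
  simpa only [← Kdir_eq_dirichletWeight_div] using
    (continuous_dirichletWeight hu hv).div_const (multiBeta u v)

theorem coord_mul_Kdir (hu : ∀ i, 0 < u i) (hv : 0 < v) {x : Fin n → ℝ} {k : Fin n}
    (hx : 0 ≤ x k) : x k * Kdir u v x = u k / (∑ i, u i + v) * Kdir (u + Pi.single k 1) v x := by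
  have := (sum_add_pos hu hv).ne'
  have hk := (hu k).ne'
  rw [Kdir_eq_dirichletWeight_div, Kdir_eq_dirichletWeight_div,
    ← coord_mul_dirichletWeight hx hk, multiBeta_add_single hu hv]
  field_simp

theorem one_le_add_single (hu : ∀ i, 1 ≤ u i) (k : Fin n) :
    ∀ i, 1 ≤ (u + Pi.single k 1 : Fin n → ℝ) i :=
  fun i => le_add_of_le_of_nonneg (hu i) (by rw [Pi.single_apply]; split_ifs <;> norm_num)

theorem integral_Kdir (hu : ∀ i, 1 ≤ u i) (hv : 1 ≤ v) : ∫ x in Sd n, Kdir u v x = 1 := by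
  simp_rw [Kdir_eq_dirichletWeight_div]
  rw [integral_div, integral_dirichletWeight hu hv,
    div_self (multiBeta_pos (fun i => by linarith [hu i]) (by linarith)).ne']

theorem integral_coord_mul_Kdir (hu : ∀ i, 1 ≤ u i) (hv : 1 ≤ v) (k : Fin n) :
    ∫ x in Sd n, x k * Kdir u v x = u k / (∑ i, u i + v) := by
  rw [setIntegral_congr_fun (measurableSet_Sd n) fun x hx =>
      coord_mul_Kdir (fun i => by linarith [hu i]) (by linarith) ((mem_Sd_iff.1 hx).1 k),
    integral_const_mul, integral_Kdir (one_le_add_single hu k) hv, mul_one]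

theorem integral_coord_mul_coord_mul_Kdir (hu : ∀ i, 1 ≤ u i) (hv : 1 ≤ v) (k l : Fin n) :
    ∫ x in Sd n, x k * x l * Kdir u v x =
      u k * (u l + if k = l then 1 else 0) / ((∑ i, u i + v) * (∑ i, u i + v + 1)) := by
  have := (sum_add_pos (fun i => by linarith [hu i]) (by linarith : 0 < v)).ne'
  rw [setIntegral_congr_fun (measurableSet_Sd n) fun x hx => by
      rw [mul_comm (x k), mul_assoc, coord_mul_Kdir (fun i => by linarith [hu i]) (by linarith)
        ((mem_Sd_iff.1 hx).1 k), mul_left_comm],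
    integral_const_mul, integral_coord_mul_Kdir (one_le_add_single hu k) hv, sum_add_single,
    Pi.add_apply, Pi.single_apply, add_right_comm]
  simp only [eq_comm (a := l)]
  field_simp

end DirichletMoments

theorem integral_sub_mul_sub_Kdir {n : ℕ} {u : Fin n → ℝ} {v : ℝ} (hu : ∀ i, 1 ≤ u i)
    (hv : 1 ≤ v) (a c : ℝ) (k l : Fin n) :
    ∫ x in Sd n, (x k - a) * (x l - c) * Kdir u v x =
      u k * (u l + if k = l then 1 else 0) / ((∑ i, u i + v) * (∑ i, u i + v + 1))
        - c * (u k / (∑ i, u i + v)) - a * (u l / (∑ i, u i + v)) + a * c := by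
  have hI : ∀ f : (Fin n → ℝ) → ℝ, Continuous f →
      IntegrableOn (fun x => f x * Kdir u v x) (Sd n) := fun f hf =>
    (hf.mul (continuous_Kdir hu hv)).continuousOn.integrableOn_compact (isCompact_Sd n)
  have hkl := hI (fun x => x k * x l) (by fun_prop)
  have hk := (hI (fun x => x k) (by fun_prop)).const_mul c
  have hl := (hI (fun x => x l) (by fun_prop)).const_mul a
  have h1 := (hI (fun _ => 1) continuous_const).const_mul (a * c)
  have hexpand : ∀ x : Fin n → ℝ, (x k - a) * (x l - c) * Kdir u v x =
      x k * x l * Kdir u v x - c * (x k * Kdir u v x) - a * (x l * Kdir u v x)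
        + a * c * (1 * Kdir u v x) := fun x => by ring
  simp_rw [hexpand]
  rw [integral_add ?_ h1, integral_sub ?_ hl, integral_sub hkl hk, integral_const_mul,
    integral_const_mul, integral_const_mul, integral_coord_mul_coord_mul_Kdir hu hv,
    integral_coord_mul_Kdir hu hv, integral_coord_mul_Kdir hu hv]
  · simp only [one_mul, integral_Kdir hu hv, mul_one]
  · exact hkl.sub hk
  · exact (hkl.sub hk).sub hl

theorem CbM_eq {d : ℕ} {s : Fin d → ℝ} (hs : s ∈ SdInt d) {b : ℝ} (hb : 0 < b) (k l : Fin d) :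
    CbM b s k l = b * ((if k = l then s k else 0) - s k * s l + b * ((1 + if k = l then 1 else 0)
        - (d + 2) * (s k + s l) + (d + 1) * (d + 2) * (s k * s l)))
      / ((1 + (d + 1) * b) * (1 + (d + 2) * b)) := by
  obtain ⟨hs0, hs1⟩ := hs
  have hu : ∀ i, 1 ≤ s i / b + 1 := fun i => by
    have := div_nonneg (hs0 i).le hb.le
    linarith
  have hv : 1 ≤ (1 - ∑ i, s i) / b + 1 := by
    have := div_nonneg (sub_nonneg.2 hs1.le) hb.le
    linarith
  have hA : ∑ i, (s i / b + 1) + ((1 - ∑ i, s i) / b + 1) = (1 + (d + 1) * b) / b := by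
    rw [Finset.sum_add_distrib, ← Finset.sum_div]
    field_simp
    simp only [Finset.sum_const, Finset.card_univ, Fintype.card_fin, nsmul_eq_mul, mul_one]
    ring
  rw [CbM, kappa, integral_sub_mul_sub_Kdir hu hv, hA]
  field_simp
  split_ifs with hkl
  · subst hkl
    ring
  · ring

theorem abs_mul_add_div_sub_le {α β c q b : ℝ} (hα : 0 ≤ α) (hβ : 0 ≤ β) (hb : 0 < b)
    (hb1 : b ≤ 1) :
    |b * (c + b * q) / ((1 + α * b) * (1 + β * b)) - b * c|
      ≤ (|q - (α + β) * c| + |α * β * c|) * b ^ 2 := by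
  have hD : 1 ≤ (1 + α * b) * (1 + β * b) :=
    one_le_mul_of_one_le_of_one_le (by nlinarith) (by nlinarith)
  have hid : b * (c + b * q) / ((1 + α * b) * (1 + β * b)) - b * c
      = b ^ 2 * (q - (α + β) * c - α * β * c * b) / ((1 + α * b) * (1 + β * b)) := by
    field_simp
    ring
  rw [hid, abs_div, abs_mul, abs_of_pos (by positivity : (0 : ℝ) < b ^ 2),
    abs_of_pos (by linarith : (0 : ℝ) < (1 + α * b) * (1 + β * b))]
  calc b ^ 2 * |q - (α + β) * c - α * β * c * b| / ((1 + α * b) * (1 + β * b))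
      ≤ b ^ 2 * |q - (α + β) * c - α * β * c * b| := div_le_self (by positivity) hD
    _ ≤ b ^ 2 * (|q - (α + β) * c| + |α * β * c| * b) := by
      gcongr
      exact (abs_sub _ _).trans (by rw [abs_mul, abs_of_pos hb])
    _ ≤ b ^ 2 * (|q - (α + β) * c| + |α * β * c|) := by
      gcongr
      exact mul_le_of_le_one_right (abs_nonneg _) hb1
    _ = (|q - (α + β) * c| + |α * β * c|) * b ^ 2 := mul_comm _ _

/-- asymptotics of `C_b(s;k,ℓ)` at a fixed interior point. -/
theorem Cb_interior_asymptotics (d : ℕ) (s : Fin d → ℝ) (hs : s ∈ SdInt d) (k l : Fin d) :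
    ∃ C > (0 : ℝ), ∃ b₀ > (0 : ℝ), ∀ b ∈ Set.Ioo (0 : ℝ) b₀,
      |CbM b s k l - b * ((if k = l then s k else 0) - s k * s l)| ≤ C * b ^ 2 := by
  set c := (if k = l then s k else 0) - s k * s l
  set q := (1 + if k = l then 1 else 0) - (d + 2) * (s k + s l) + (d + 1) * (d + 2) * (s k * s l)
  refine ⟨|q - ((d + 1) + (d + 2)) * c| + |(d + 1) * (d + 2) * c| + 1, by positivity, 1, one_pos,
    fun b hb => ?_⟩
  rw [CbM_eq hs hb.1]
  calc _ ≤ (|q - ((d + 1) + (d + 2)) * c| + |(d + 1) * (d + 2) * c|) * b ^ 2 :=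
        abs_mul_add_div_sub_le (by positivity) (by positivity) hb.1 hb.2.le
    _ ≤ _ := mul_le_mul_of_nonneg_right (by linarith) (sq_nonneg b)
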